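/- Let P be a curve of m points in ℝ^d and l > 0. Let S = {j ∈ {1,…,m−1} : ‖P[j]−P[j+1]‖ ≤ l}, and let P' be the curve obtained from P by deleting the points P[j] with j ∈ S (P' is nonempty since P[m] is retained). Then dFr(P,P') ≤ m·l. -/

import Mathlib

noncomputable section

abbrev Pt (d : ℕ) : Type := EuclideanSpace ℝ (Fin d)

/-- Cost contribution of a single pair of blocks: the maximum distance between a point
of `A` and a point of `B` (0 if one of them is empty). -/
def pairCost {d : ℕ} (A B : List (Pt d)) : ℝ :=
  (A.map fun p => (B.map fun q => dist p q).foldr max 0).foldr max 0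

/-- `ω` is a paired walk along `P` and `Q`: the first components partition `P` into
consecutive nonempty blocks, the second components partition `Q`, and in each pair at
least one block is a single point. -/
def IsPairedWalk {d : ℕ} (ω : List (List (Pt d) × List (Pt d))) (P Q : List (Pt d)) : Prop :=
  (ω.map Prod.fst).flatten = P ∧ (ω.map Prod.snd).flatten = Q ∧
    ∀ pr ∈ ω, pr.1 ≠ [] ∧ pr.2 ≠ [] ∧ (pr.1.length = 1 ∨ pr.2.length = 1)

/-- The cost of a paired walk: the maximum over its pairs of the maximum distance between
matched points. -/
def walkCost {d : ℕ} (ω : List (List (Pt d) × List (Pt d))) : ℝ :=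
  (ω.map fun pr => pairCost pr.1 pr.2).foldr max 0

/-- The discrete Fréchet distance: the minimum cost over all paired walks along `P` and `Q`. -/
def dFr {d : ℕ} (P Q : List (Pt d)) : ℝ :=
  sInf {c : ℝ | ∃ ω, IsPairedWalk ω P Q ∧ walkCost ω = c}

/-- The curve obtained from `P` by deleting every point `P[j]` whose following edge
`(P[j],P[j+1])` has length at most `l` (the last point is always kept). -/
def pruned {d : ℕ} (l : ℝ) (P : List (Pt d)) : List (Pt d) :=
  ((List.finRange P.length).filter fun (i : Fin P.length) =>
      decide ((i : ℕ) + 1 = P.length) ||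
        decide (l < dist (P.get i) (P.getD ((i : ℕ) + 1) 0))).map P.get

/-- Contracting all edges of length at most `l` moves the curve by at most `m·l` in the
discrete Fréchet distance. -/
lemma foldr_max_nonneg (L : List ℝ) : 0 ≤ L.foldr max 0 := by
  induction L with
  | nil => simp
  | cons a L ih => exact le_trans ih (le_max_right _ _)

lemma foldr_max_le {L : List ℝ} {c : ℝ} (h0 : 0 ≤ c) (h : ∀ x ∈ L, x ≤ c) :
    L.foldr max 0 ≤ c := by
  induction L with
  | nil => simpa
  | cons a L ih =>
    simp only [List.foldr_cons, max_le_iff]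
    exact ⟨h a (by simp), ih fun x hx => h x (by simp [hx])⟩

lemma le_foldr_max {L : List ℝ} {x : ℝ} (hx : x ∈ L) : x ≤ L.foldr max 0 := by
  induction L with
  | nil => simp at hx
  | cons a L ih =>
    rcases List.mem_cons.1 hx with rfl | h
    · exact le_max_left _ _
    · exact le_trans (ih h) (le_max_right _ _)

lemma pairCost_nonneg {d : ℕ} (A B : List (Pt d)) : 0 ≤ pairCost A B :=
  foldr_max_nonneg _

lemma pairCost_le {d : ℕ} {A B : List (Pt d)} {c : ℝ} (h0 : 0 ≤ c)
    (h : ∀ p ∈ A, ∀ q ∈ B, dist p q ≤ c) : pairCost A B ≤ c := by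
  refine foldr_max_le h0 ?_
  intro x hx
  obtain ⟨p, hp, rfl⟩ := List.mem_map.1 hx
  refine foldr_max_le h0 ?_
  intro y hy
  obtain ⟨q, hq, rfl⟩ := List.mem_map.1 hy
  exact h p hp q hq

lemma dist_le_pairCost {d : ℕ} {A B : List (Pt d)} {p q : Pt d} (hp : p ∈ A) (hq : q ∈ B) :
    dist p q ≤ pairCost A B :=
  le_trans (le_foldr_max (List.mem_map_of_mem (f := fun q => dist p q) hq)) (le_foldr_max (List.mem_map_of_mem (f := fun p => (B.map fun q => dist p q).foldr max 0) hp))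

lemma walkCost_nonneg {d : ℕ} (ω : List (List (Pt d) × List (Pt d))) : 0 ≤ walkCost ω :=
  foldr_max_nonneg _

lemma walkCost_cons {d : ℕ} (pr : List (Pt d) × List (Pt d)) (ω : List (List (Pt d) × List (Pt d))) :
    walkCost (pr :: ω) = max (pairCost pr.1 pr.2) (walkCost ω) := rfl

lemma dFr_le {d : ℕ} {P Q : List (Pt d)} {ω : List (List (Pt d) × List (Pt d))}
    (h : IsPairedWalk ω P Q) : dFr P Q ≤ walkCost ω := by
  refine csInf_le ⟨0, ?_⟩ ⟨ω, h, rfl⟩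
  rintro c ⟨ω', _, rfl⟩
  exact walkCost_nonneg ω'

lemma pruned_cons_cons {d : ℕ} (l : ℝ) (p q : Pt d) (R : List (Pt d)) :
    pruned l (p :: q :: R) = (if l < dist p q then [p] else []) ++ pruned l (q :: R) := by
  unfold pruned
  simp only [List.length_cons]
  rw [List.finRange_succ, List.filter_cons, List.filter_map]
  have hfun : ((p :: q :: R).get ∘ Fin.succ) = (q :: R).get := by
    funext i; rfl
  have hcond : ∀ i ∈ List.finRange (R.length + 1),
      ((fun (i : Fin (R.length + 1 + 1)) => decide ((i : ℕ) + 1 = R.length + 1 + 1) ||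
        decide (l < dist ((p :: q :: R).get i) ((p :: q :: R).getD ((i : ℕ) + 1) 0))) ∘ Fin.succ) i
      = (fun (i : Fin (R.length + 1)) => decide ((i : ℕ) + 1 = R.length + 1) ||
        decide (l < dist ((q :: R).get i) ((q :: R).getD ((i : ℕ) + 1) 0))) i := by
    intro i _
    simp only [Function.comp_apply]
    congr 1
    simp [Fin.val_succ]
  rw [List.filter_congr hcond]
  have h0 : ((0 : Fin (R.length + 1 + 1)) : ℕ) = 0 := rfl
  by_cases hpq : l < dist p q
  · simp only [h0, List.get, List.getD_cons_succ, List.getD_cons_zero]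
    rw [if_pos (by simp [hpq])]
    simp [hpq, List.map_map, hfun]
  · simp only [h0, List.get, List.getD_cons_succ, List.getD_cons_zero]
    rw [if_neg (by simp [hpq, Nat.succ_ne_zero])]
    simp [hpq, List.map_map, hfun]

lemma pruned_singleton {d : ℕ} (l : ℝ) (p : Pt d) : pruned l [p] = [p] := by
  simp [pruned, List.finRange_succ]

lemma exists_walk {d : ℕ} (l : ℝ) (hl : 0 < l) :
    ∀ Q : List (Pt d), Q ≠ [] →
      ∃ (A : List (Pt d)) (r : Pt d) (ω' : List (List (Pt d) × List (Pt d))),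
        IsPairedWalk ((A, [r]) :: ω') Q (pruned l Q) ∧
        walkCost ((A, [r]) :: ω') ≤ (Q.length : ℝ) * l := by
  intro Q
  induction Q with
  | nil => intro h; exact absurd rfl h
  | cons p Q ih =>
    intro _
    cases Q with
    | nil =>
      refine ⟨[p], p, [], ⟨by simp, by simp [pruned_singleton], by simp⟩, ?_⟩
      have : walkCost [([p], [p])] = 0 := by
        simp [walkCost, pairCost]
      rw [this]
      positivity
    | cons q R =>
      obtain ⟨A, r, ω', ⟨h1, h2, h3⟩, hcost⟩ := ih (by simp)
      have hA : A ≠ [] := (h3 (A, [r]) (by simp)).1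
      obtain ⟨A', rfl⟩ : ∃ A', A = q :: A' := by
        cases A with
        | nil => exact absurd rfl hA
        | cons a A'' =>
          refine ⟨A'', ?_⟩
          simp only [List.map_cons, List.flatten_cons, List.cons_append] at h1
          injection h1 with ha _
          rw [ha]
      have hlen : ((q :: R).length : ℝ) * l ≤ ((p :: q :: R).length : ℝ) * l := by
        have h : ((q :: R).length : ℝ) ≤ ((p :: q :: R).length : ℝ) := by
          push_cast [List.length_cons]; linarith
        exact mul_le_mul_of_nonneg_right h hl.le
      have h0' : (0:ℝ) ≤ ((p :: q :: R).length : ℝ) * l := by positivity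
      by_cases hpq : l < dist p q
      · refine ⟨[p], p, (q :: A', [r]) :: ω', ⟨?_, ?_, ?_⟩, ?_⟩
        · simpa using h1
        · rw [pruned_cons_cons, if_pos hpq]
          simpa using h2
        · intro pr hpr
          rcases List.mem_cons.1 hpr with rfl | h
          · exact ⟨by simp, by simp, Or.inl rfl⟩
          · exact h3 pr h
        · rw [walkCost_cons]
          refine max_le ?_ (le_trans hcost hlen)
          have : pairCost [p] [p] = 0 := by simp [pairCost]
          rw [this]; exact h0'
      · refine ⟨p :: q :: A', r, ω', ⟨?_, ?_, ?_⟩, ?_⟩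
        · simpa using h1
        · rw [pruned_cons_cons, if_neg hpq]
          simpa using h2
        · intro pr hpr
          rcases List.mem_cons.1 hpr with rfl | h
          · exact ⟨by simp, by simp, Or.inr rfl⟩
          · exact h3 pr (by simp [h])
        · have hrest : walkCost ω' ≤ ((q :: R).length : ℝ) * l := by
            refine le_trans ?_ hcost
            rw [walkCost_cons]; exact le_max_right _ _
          have hAr : pairCost (q :: A') [r] ≤ ((q :: R).length : ℝ) * l := by
            refine le_trans ?_ hcost
            rw [walkCost_cons]; exact le_max_left _ _
          rw [walkCost_cons]
          refine max_le ?_ (le_trans hrest hlen)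
          refine pairCost_le h0' ?_
          intro x hx y hy
          rw [List.mem_singleton.1 hy]
          rcases List.mem_cons.1 hx with hxp | hx'
          · rw [hxp]
            calc dist p r ≤ dist p q + dist q r := dist_triangle _ _ _
              _ ≤ l + pairCost (q :: A') [r] :=
                  add_le_add (not_lt.1 hpq) (dist_le_pairCost (by simp) (by simp))
              _ ≤ l + ((q :: R).length : ℝ) * l := by linarith
              _ ≤ ((p :: q :: R).length : ℝ) * l := by
                  push_cast [List.length_cons]; ring_nf; linarith
          · calc dist x r ≤ pairCost (q :: A') [r] := dist_le_pairCost (by simp [hx']) (by simp)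
              _ ≤ _ := le_trans hAr hlen


theorem pruned_close {d : ℕ} (l : ℝ) (hl : 0 < l) (P : List (Pt d)) (hP : P ≠ []) :
    dFr P (pruned l P) ≤ (P.length : ℝ) * l := by
  obtain ⟨A, r, ω', hw, hc⟩ := exists_walk l hl P hP
  exact le_trans (dFr_le hw) hc
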